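/- arXiv:2412.17074 — 4 statements merged into one kernel-verified Lean document; each statement's English description precedes it below -/
import Mathlib

section
/- For every connected graph G, the local metric dimension satisfies dim_l(G) ≥ ⌈log₂ ω(G)⌉. -/
open SimpleGraph

variable {V : Type*}

/-- `W` is a local resolving set of `G`: any two adjacent vertices outside `W`
have different distance to some vertex of `W`. -/
def IsLocalResolvingSet [Fintype V] (G : SimpleGraph V) (W : Finset V) : Prop :=
  ∀ u v : V, u ∉ W → v ∉ W → G.Adj u v → ∃ w ∈ W, G.dist u w ≠ G.dist v w

/-- The local metric dimension of `G`: minimum cardinality of a local resolving set. -/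
noncomputable def localDim [Fintype V] (G : SimpleGraph V) : ℕ :=
  sInf {k | ∃ W : Finset V, IsLocalResolvingSet G W ∧ W.card = k}

/-- `K_n^-(λ,μ)`: complete graph on `Fin n` minus the edges of a complete bipartite
subgraph between `L = [0,lam)` and `M = [lam, lam+mu)`. -/
def KnMinus (n lam mu : ℕ) : SimpleGraph (Fin n) where
  Adj u v := u ≠ v ∧ ¬((u.val < lam ∧ lam ≤ v.val ∧ v.val < lam + mu) ∨
                       (v.val < lam ∧ lam ≤ u.val ∧ u.val < lam + mu))
  symm := ⟨by
    intro u v ⟨h1, h2⟩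
    exact ⟨h1.symm, fun h => h2 h.symm⟩⟩
  loopless := ⟨fun u h => h.1 rfl⟩

/-- The graph `Γ₁`: a `K₄` on `{0,1,2,3}` plus edges `0-4`, `1-4`, `0-5`, `2-5`
(vertices `0,…,5` standing for `v₁,…,v₆`). -/
def Gamma1 : SimpleGraph (Fin 6) :=
  SimpleGraph.fromRel (fun u v => ((u : ℕ), (v : ℕ)) ∈
    [(0,1),(0,2),(0,3),(1,2),(1,3),(2,3),(0,4),(1,4),(0,5),(2,5)])

/-- The graph `Γ₂ = Γ₁` plus the edge `v₅v₆`. -/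
def Gamma2 : SimpleGraph (Fin 6) :=
  SimpleGraph.fromRel (fun u v => ((u : ℕ), (v : ℕ)) ∈
    [(0,1),(0,2),(0,3),(1,2),(1,3),(2,3),(0,4),(1,4),(0,5),(2,5),(4,5)])

/-- `G_ℓ`: a universal vertex (`none`) joined to the disjoint union of `ℓ` triangles. -/
def Gell (l : ℕ) : SimpleGraph (Option (Fin l × Fin 3)) where
  Adj u v := u ≠ v ∧ ∀ x y, u = some x → v = some y → x.1 = y.1
  symm := ⟨by
    intro u v ⟨h1, h2⟩
    exact ⟨h1.symm, fun x y hx hy => (h2 y x hy hx).symm⟩⟩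
  loopless := ⟨fun u h => h.1 rfl⟩

/-!
Distances from adjacent vertices to a fixed vertex differ by at most one, so they differ
exactly when their parities do. Hence, for a local resolving set `W`, the vector of parities
of the distances to the vertices of `W` separates adjacent vertices, in particular it is
injective on a clique, which therefore has at most `2 ^ #W` vertices.
-/

namespace SimpleGraph

theorem Adj.even_dist_iff_not_even_of_dist_ne {G : SimpleGraph V} {u v w : V}
    (hadj : G.Adj u v) (hne : G.dist u w ≠ G.dist v w) :
    Even (G.dist u w) ↔ ¬Even (G.dist v w) := by
  rw [G.dist_comm (u := u), G.dist_comm (u := v)] at hne ⊢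
  rcases hadj.diff_dist_adj (u := w) with h | h | h <;> rw [h] at hne ⊢
  · exact absurd rfl hne
  · rw [Nat.even_add_one, not_not]
  · obtain ⟨k, hk⟩ : ∃ k, G.dist w u = k + 1 := Nat.exists_eq_add_one.mpr (by omega)
    rw [hk, Nat.add_sub_cancel, Nat.even_add_one]

end SimpleGraph

noncomputable def distParityVector (G : SimpleGraph V) (W : Finset V) (u : V) : W → Bool :=
  fun w => decide (Even (G.dist u w))

namespace IsLocalResolvingSet

variable [Fintype V] {G : SimpleGraph V} {W : Finset V}

theorem exists_dist_ne (hW : IsLocalResolvingSet G W) {u v : V} (hadj : G.Adj u v) :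
    ∃ w ∈ W, G.dist u w ≠ G.dist v w := by
  by_cases hu : u ∈ W
  · refine ⟨u, hu, ?_⟩
    rw [dist_self, dist_eq_one_iff_adj.mpr hadj.symm]
    exact zero_ne_one
  by_cases hv : v ∈ W
  · refine ⟨v, hv, ?_⟩
    rw [dist_self, dist_eq_one_iff_adj.mpr hadj]
    exact one_ne_zero
  exact hW u v hu hv hadj

theorem distParityVector_ne (hW : IsLocalResolvingSet G W) {u v : V} (hadj : G.Adj u v) :
    distParityVector G W u ≠ distParityVector G W v := by
  obtain ⟨w, hw, hne⟩ := hW.exists_dist_ne hadj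
  intro heq
  have := congrFun heq ⟨w, hw⟩
  simp only [distParityVector, decide_eq_decide] at this
  have h := hadj.even_dist_iff_not_even_of_dist_ne hne
  rw [this] at h
  exact iff_not_self h

theorem card_le_two_pow_of_isClique (hW : IsLocalResolvingSet G W) {s : Finset V}
    (hs : G.IsClique (s : Set V)) : s.card ≤ 2 ^ W.card := by
  classical
  have hinj : Set.InjOn (distParityVector G W) s := fun u hu v hv heq ↦ by
    by_contra hne
    exact hW.distParityVector_ne (hs hu hv hne) heq
  simpa using Finset.card_le_card_of_injOn _ (fun _ _ ↦ Finset.mem_univ _) hinj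

end IsLocalResolvingSet

theorem exists_isLocalResolvingSet_card_eq_localDim [Fintype V] (G : SimpleGraph V) :
    ∃ W : Finset V, IsLocalResolvingSet G W ∧ W.card = localDim G :=
  Nat.sInf_mem (s := {k | ∃ W : Finset V, IsLocalResolvingSet G W ∧ W.card = k})
    ⟨Fintype.card V, Finset.univ, fun u _ hu ↦ absurd (Finset.mem_univ u) hu, rfl⟩

theorem stmt_4_general [Fintype V] (G : SimpleGraph V) :
    Nat.clog 2 G.cliqueNum ≤ localDim G := by
  rw [Nat.clog_le_iff_le_pow one_lt_two]
  obtain ⟨W, hW, hcard⟩ := exists_isLocalResolvingSet_card_eq_localDim G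
  obtain ⟨s, hs⟩ := G.exists_isNClique_cliqueNum
  rw [← hs.card_eq, ← hcard]
  exact hW.card_le_two_pow_of_isClique hs.isClique

/-- For every connected graph `G`, `dim_l(G) ≥ ⌈log₂ ω(G)⌉`. -/
theorem stmt_4 [Fintype V] (G : SimpleGraph V) (hconn : G.Connected) :
    Nat.clog 2 G.cliqueNum ≤ localDim G :=
  stmt_4_general G
end

section
/- For every connected graph G, the local metric dimension satisfies dim_l(G) ≥ n(G) - 2^{n(G) - ω(G)}. -/
/-!
Fix a local resolving set `W` and a maximum clique `C`. Two vertices of `C \ W` are adjacent, so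
some `w ∈ W` tells them apart; `w ∉ C`, as otherwise both are at distance one from it. Distances
from `w` to adjacent vertices differ by at most one, so the two vertices have different distance
parities to `w`. Hence the parity vector on `W \ C` is injective on `C \ W`, giving
`ω - |C ∩ W| ≤ 2 ^ |W \ C|`, and `p + 2 ^ q ≤ 2 ^ p + q` for `q = |W \ C| ≤ p = n - ω` finishes.
-/

open SimpleGraph

variable {V : Type*}

open Finset

lemma add_two_pow_le_two_pow_add {p q : ℕ} (h : q ≤ p) : p + 2 ^ q ≤ 2 ^ p + q := by
  induction p, h using Nat.le_induction with
  | base => omega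
  | succ p _ ih =>
    have : 1 ≤ 2 ^ p := Nat.one_le_two_pow
    rw [pow_succ]
    omega

lemma SimpleGraph.Adj.dist_eq_of_dist_mod_two_eq {G : SimpleGraph V} {u v w : V}
    (hadj : G.Adj u v) (h : G.dist u w % 2 = G.dist v w % 2) : G.dist u w = G.dist v w := by
  rw [dist_comm, dist_comm (u := v)] at h ⊢
  rcases hadj.diff_dist_adj (u := w) with h' | h' | h' <;> omega

section

variable [Fintype V] {G : SimpleGraph V} {W : Finset V}

lemma IsLocalResolvingSet.card_sdiff_le_two_pow [DecidableEq V] (hW : IsLocalResolvingSet G W)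
    {C : Finset V} (hC : G.IsClique (C : Set V)) : #(C \ W) ≤ 2 ^ #(W \ C) := by
  let parity : V → (↥(W \ C) → ZMod 2) := fun u w => (G.dist u w : ZMod 2)
  have hinj : Set.InjOn parity ↑(C \ W) := by
    intro u hu v hv huv
    by_contra hne
    simp only [coe_sdiff, Set.mem_sdiff, mem_coe] at hu hv
    obtain ⟨w, hwW, hwd⟩ := hW u v hu.2 hv.2 (hC hu.1 hv.1 hne)
    have hwC : w ∉ C := fun hwC => hwd <| by
      rw [dist_eq_one_iff_adj.2 (hC hu.1 hwC (ne_of_mem_of_not_mem hwW hu.2).symm),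
        dist_eq_one_iff_adj.2 (hC hv.1 hwC (ne_of_mem_of_not_mem hwW hv.2).symm)]
    have hpar := congrFun huv ⟨w, mem_sdiff.2 ⟨hwW, hwC⟩⟩
    exact hwd <| (hC hu.1 hv.1 hne).dist_eq_of_dist_mod_two_eq <|
      (ZMod.natCast_eq_natCast_iff' _ _ _).1 hpar
  calc #(C \ W) ≤ #(univ : Finset (↥(W \ C) → ZMod 2)) :=
        card_le_card_of_injOn parity (fun _ _ => mem_univ _) hinj
    _ = 2 ^ #(W \ C) := by rw [card_univ, Fintype.card_fun, ZMod.card, Fintype.card_coe]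

lemma IsLocalResolvingSet.card_sub_two_pow_le (hW : IsLocalResolvingSet G W) :
    Fintype.card V - 2 ^ (Fintype.card V - G.cliqueNum) ≤ #W := by
  classical
  obtain ⟨C, hC⟩ := G.exists_isNClique_cliqueNum
  have hclique := hW.card_sdiff_le_two_pow hC.isClique
  have hC_split : #(C \ W) + #(C ∩ W) = G.cliqueNum := hC.card_eq ▸ card_sdiff_add_card_inter C W
  have hW_split : #(W \ C) + #(W ∩ C) = #W := card_sdiff_add_card_inter W C
  have hωn : G.cliqueNum ≤ Fintype.card V := hC.card_eq ▸ card_le_univ C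
  have hq : #(W \ C) ≤ Fintype.card V - G.cliqueNum := by
    rw [← hC.card_eq, ← card_compl]
    exact card_le_card fun x hx => mem_compl.2 (mem_sdiff.1 hx).2
  have := add_two_pow_le_two_pow_add hq
  rw [inter_comm] at hW_split
  omega

end

theorem stmt_5_general [Fintype V] (G : SimpleGraph V) :
    Fintype.card V - 2 ^ (Fintype.card V - G.cliqueNum) ≤ localDim G := by
  refine le_csInf ⟨_, univ, fun u _ hu _ _ => absurd (mem_univ u) hu, rfl⟩ ?_
  rintro _ ⟨W, hW, rfl⟩
  exact hW.card_sub_two_pow_le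

/-- For every connected graph `G`, `dim_l(G) ≥ n(G) - 2 ^ (n(G) - ω(G))`. -/
theorem stmt_5 [Fintype V] (G : SimpleGraph V) (hconn : G.Connected) :
    Fintype.card V - 2 ^ (Fintype.card V - G.cliqueNum) ≤ localDim G :=
  stmt_5_general G
end

section
/- Let n ≥ 3 and let λ, μ be positive integers with 1 ≤ μ ≤ λ and λ + μ ≤ n - 1. Let K_n^-(λ,μ) denote the graph obtained from the complete graph K_n by deleting the edge set of a complete bipartite subgraph K_{λ,μ}. Then dim_l(K_n^-(λ,μ)) = n - 2 if μ = 1, and dim_l(K_n^-(λ,μ)) = n - 3 if μ ≥ 2. -/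
open SimpleGraph

variable {V : Type*}

/-!
Write `R` for the vertices outside `L ∪ M`; it is nonempty and each of its vertices is adjacent
to every other vertex. Hence two distinct vertices are at distance `1` or `2` according to
whether they are adjacent, and two vertices in the same part among `L`, `M`, `R` are adjacent
twins. So a local resolving set omits at most one vertex from each part: `n - 3 ≤ dim_l`.
For `λ, μ ≥ 2` omitting `a ∈ L`, `b ∈ M`, `c ∈ R` suffices: `a, b` are not adjacent, a
second vertex of `M` resolves `a, c`, and a second vertex of `L` resolves `b, c`. For `μ = 1`
the only vertex of `M` must lie in `W`, or else the omitted vertices of `L` and `R` are at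
distance `1` from all of `W`; this leaves at most two vertices outside `W`, and omitting one
vertex of `L` and one of `R` works.
-/

open Finset

namespace SimpleGraph

variable {G : SimpleGraph V} {u v : V}

lemma dist_eq_two_iff :
    G.dist u v = 2 ↔ u ≠ v ∧ ¬ G.Adj u v ∧ (G.commonNeighbors u v).Nonempty := by
  rw [dist, ENat.toNat_eq_iff two_ne_zero]
  exact_mod_cast edist_eq_two_iff

end SimpleGraph

section LocalResolving

variable [Fintype V] {G : SimpleGraph V} {W : Finset V}

lemma localDim_eq_of_exists {k : ℕ} (hex : ∃ W, IsLocalResolvingSet G W ∧ W.card = k)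
    (hmin : ∀ W, IsLocalResolvingSet G W → k ≤ W.card) : localDim G = k :=
  le_antisymm (Nat.sInf_le hex) <|
    le_csInf ⟨k, hex⟩ (by rintro _ ⟨W, hW, rfl⟩; exact hmin W hW)

lemma isLocalResolvingSet_compl_iff [DecidableEq V] {U : Finset V} :
    IsLocalResolvingSet G Uᶜ ↔
      ∀ u ∈ U, ∀ v ∈ U, G.Adj u v → ∃ w ∉ U, G.dist u w ≠ G.dist v w := by
  simp only [IsLocalResolvingSet, mem_compl, not_not]
  exact ⟨fun h u hu v hv ↦ h u v hu hv, fun h u v hu hv ↦ h u hu v hv⟩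

lemma IsLocalResolvingSet.injOn_compl [DecidableEq V] {α : Type*} (hW : IsLocalResolvingSet G W)
    (f : V → α) (htwin : ∀ u v, u ≠ v → f u = f v →
      G.Adj u v ∧ ∀ w, w ≠ u → w ≠ v → G.dist u w = G.dist v w) :
    Set.InjOn f (↑Wᶜ : Set V) := by
  intro u hu v hv hf
  simp only [coe_compl, Set.mem_compl_iff, mem_coe] at hu hv
  by_contra huv
  obtain ⟨hadj, hdist⟩ := htwin u v huv hf
  obtain ⟨w, hw, hne⟩ := hW u v hu hv hadj
  exact hne (hdist w (ne_of_mem_of_not_mem hw hu) (ne_of_mem_of_not_mem hw hv))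

end LocalResolving

namespace KnMinus

variable {n lam mu : ℕ} {u v w : Fin n}

def part (lam mu : ℕ) (u : Fin n) : Fin 3 :=
  if u.val < lam then 0 else if u.val < lam + mu then 1 else 2

lemma part_eq_zero_iff : part lam mu u = 0 ↔ u.val < lam := by
  unfold part; split_ifs <;> simp <;> omega

lemma part_eq_one_iff : part lam mu u = 1 ↔ lam ≤ u.val ∧ u.val < lam + mu := by
  unfold part; split_ifs <;> simp <;> omega

lemma part_eq_two_iff : part lam mu u = 2 ↔ lam + mu ≤ u.val := by
  unfold part; split_ifs <;> simp <;> omega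

lemma adj_iff :
    (KnMinus n lam mu).Adj u v ↔ u ≠ v ∧ s(part lam mu u, part lam mu v) ≠ s(0, 1) := by
  simp only [KnMinus, part]
  split_ifs <;> simp <;> omega

lemma adj_of_part_eq_two (hu : part lam mu u = 2) (huv : u ≠ v) : (KnMinus n lam mu).Adj u v :=
  adj_iff.mpr ⟨huv, by simp [hu]⟩

lemma adj_of_part_eq (h : part lam mu u = part lam mu v) (huv : u ≠ v) :
    (KnMinus n lam mu).Adj u v :=
  adj_iff.mpr ⟨huv, by rw [h]; generalize part lam mu v = i; revert i; decide⟩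

/-- Any vertex outside `L ∪ M` is a common neighbour of the two ends of a deleted edge. -/
lemma dist_of_ne (hsum : lam + mu < n) (huv : u ≠ v) :
    (KnMinus n lam mu).dist u v = if s(part lam mu u, part lam mu v) = s(0, 1) then 2 else 1 := by
  split_ifs with hcross
  · set r : Fin n := ⟨lam + mu, hsum⟩
    have hr : part lam mu r = 2 := by simp [part, r]
    have hadj : ¬ (KnMinus n lam mu).Adj u v := fun h ↦ (adj_iff.mp h).2 hcross
    have hur : u ≠ r := fun h ↦ hadj (adj_of_part_eq_two (h ▸ hr) huv)
    have hvr : v ≠ r := fun h ↦ hadj (adj_of_part_eq_two (h ▸ hr) huv.symm).symm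
    refine dist_eq_two_iff.mpr ⟨huv, hadj, r, (mem_commonNeighbors _).mpr ⟨?_, ?_⟩⟩
    · exact (adj_of_part_eq_two hr hur.symm).symm
    · exact (adj_of_part_eq_two hr hvr.symm).symm
  · exact dist_eq_one_iff_adj.mpr (adj_iff.mpr ⟨huv, hcross⟩)

lemma dist_eq_two_of_part_eq_zero_of_part_eq_one (hsum : lam + mu < n)
    (hu : part lam mu u = 0) (hv : part lam mu v = 1) : (KnMinus n lam mu).dist u v = 2 := by
  rw [dist_of_ne hsum (ne_of_apply_ne (part lam mu) (by simp [hu, hv])), hu, hv, if_pos rfl]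

lemma dist_eq_one_of_part_eq_two (hu : part lam mu u = 2) (hv : part lam mu v ≠ 2) :
    (KnMinus n lam mu).dist u v = 1 :=
  dist_eq_one_iff_adj.mpr (adj_of_part_eq_two hu fun h ↦ hv (h ▸ hu))

lemma dist_eq_of_part_eq (hsum : lam + mu < n) (h : part lam mu u = part lam mu v)
    (hwu : w ≠ u) (hwv : w ≠ v) :
    (KnMinus n lam mu).dist u w = (KnMinus n lam mu).dist v w := by
  rw [dist_of_ne hsum hwu.symm, dist_of_ne hsum hwv.symm, h]

variable {W : Finset (Fin n)}

lemma injOn_part (hsum : lam + mu < n) (hW : IsLocalResolvingSet (KnMinus n lam mu) W) :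
    Set.InjOn (part lam mu) (↑Wᶜ : Set (Fin n)) :=
  hW.injOn_compl _ fun _ _ huv h ↦
    ⟨adj_of_part_eq h huv, fun _ hwu hwv ↦ dist_eq_of_part_eq hsum h hwu hwv⟩

lemma sub_three_le_card (hsum : lam + mu < n) (hW : IsLocalResolvingSet (KnMinus n lam mu) W) :
    n - 3 ≤ W.card := by
  have h := card_le_card_of_injOn (part lam mu) (fun _ _ ↦ mem_univ _) (injOn_part hsum hW)
  rw [card_compl, card_univ, Fintype.card_fin, Fintype.card_fin] at h
  omega

lemma exists_part_not_mem_compl (hsum : lam + 1 < n)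
    (hW : IsLocalResolvingSet (KnMinus n lam 1) W) : ∃ i, ∀ u ∉ W, part lam 1 u ≠ i := by
  by_contra! hall
  obtain ⟨u, hu, hu0⟩ := hall 0
  obtain ⟨m, hm, hm1⟩ := hall 1
  obtain ⟨v, hv, hv2⟩ := hall 2
  have huv : u ≠ v := fun h ↦ by simp [h, hv2] at hu0
  obtain ⟨w, hw, hne⟩ := hW u v hu hv (adj_of_part_eq_two hv2 huv.symm).symm
  have hw1 : part lam 1 w ≠ 1 := by
    intro hw1
    rw [part_eq_one_iff] at hw1 hm1
    exact hm (Fin.ext (show w.val = m.val by omega) ▸ hw)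
  apply hne
  rw [dist_of_ne hsum (ne_of_mem_of_not_mem hw hu).symm,
    dist_of_ne hsum (ne_of_mem_of_not_mem hw hv).symm, hu0, hv2]
  generalize part lam 1 w = i at hw1
  revert i; decide

lemma sub_two_le_card (hsum : lam + 1 < n) (hW : IsLocalResolvingSet (KnMinus n lam 1) W) :
    n - 2 ≤ W.card := by
  obtain ⟨i, hi⟩ := exists_part_not_mem_compl hsum hW
  have h := card_le_card_of_injOn (part lam 1) (t := univ.erase i)
    (fun u hu ↦ mem_erase.mpr ⟨hi u (mem_compl.mp hu), mem_univ _⟩) (injOn_part hsum hW)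
  rw [card_compl, card_erase_of_mem (mem_univ _), card_univ, Fintype.card_fin,
    Fintype.card_fin] at h
  omega

lemma exists_isLocalResolvingSet_card_eq_sub_two (hlam : 1 ≤ lam) (hsum : lam + 1 < n) :
    ∃ W, IsLocalResolvingSet (KnMinus n lam 1) W ∧ W.card = n - 2 := by
  set a : Fin n := ⟨0, by omega⟩
  set m : Fin n := ⟨lam, by omega⟩
  set c : Fin n := ⟨lam + 1, hsum⟩
  have ha : part lam 1 a = 0 := part_eq_zero_iff.mpr hlam
  have hm : part lam 1 m = 1 := part_eq_one_iff.mpr (by simp [m])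
  have hc : part lam 1 c = 2 := part_eq_two_iff.mpr le_rfl
  have hresolve : (KnMinus n lam 1).dist a m ≠ (KnMinus n lam 1).dist c m := by
    rw [dist_eq_two_of_part_eq_zero_of_part_eq_one hsum ha hm,
      dist_eq_one_of_part_eq_two hc (by simp [hm])]
    decide
  have hmW : m ∉ ({a, c} : Finset (Fin n)) := by simp [a, m, c, Fin.ext_iff]; omega
  refine ⟨{a, c}ᶜ, isLocalResolvingSet_compl_iff.mpr ?_, ?_⟩
  · rintro u hu v hv hadj
    simp only [mem_insert, mem_singleton] at hu hv
    obtain rfl | rfl := hu <;> obtain rfl | rfl := hv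
    · exact absurd rfl hadj.ne
    · exact ⟨m, hmW, hresolve⟩
    · exact ⟨m, hmW, hresolve.symm⟩
    · exact absurd rfl hadj.ne
  · rw [card_compl, Fintype.card_fin, card_pair (ne_of_apply_ne (part lam 1) (by simp [ha, hc]))]

lemma exists_isLocalResolvingSet_card_eq_sub_three (hlam : 2 ≤ lam) (hmu : 2 ≤ mu)
    (hsum : lam + mu < n) : ∃ W, IsLocalResolvingSet (KnMinus n lam mu) W ∧ W.card = n - 3 := by
  set a : Fin n := ⟨0, by omega⟩
  set a' : Fin n := ⟨1, by omega⟩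
  set b : Fin n := ⟨lam, by omega⟩
  set b' : Fin n := ⟨lam + 1, by omega⟩
  set c : Fin n := ⟨lam + mu, hsum⟩
  have ha : part lam mu a = 0 := part_eq_zero_iff.mpr (by simp [a]; omega)
  have ha' : part lam mu a' = 0 := part_eq_zero_iff.mpr (by simp [a']; omega)
  have hb : part lam mu b = 1 := part_eq_one_iff.mpr (by simp [b]; omega)
  have hb' : part lam mu b' = 1 := part_eq_one_iff.mpr (by simp [b']; omega)
  have hc : part lam mu c = 2 := part_eq_two_iff.mpr (by simp [c])
  have hab : ¬ (KnMinus n lam mu).Adj a b := fun h ↦ (adj_iff.mp h).2 (by rw [ha, hb])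
  have hresolve_ac : (KnMinus n lam mu).dist a b' ≠ (KnMinus n lam mu).dist c b' := by
    rw [dist_eq_two_of_part_eq_zero_of_part_eq_one hsum ha hb',
      dist_eq_one_of_part_eq_two hc (by simp [hb'])]
    decide
  have hresolve_bc : (KnMinus n lam mu).dist b a' ≠ (KnMinus n lam mu).dist c a' := by
    rw [dist_comm, dist_eq_two_of_part_eq_zero_of_part_eq_one hsum ha' hb,
      dist_eq_one_of_part_eq_two hc (by simp [ha'])]
    decide
  have ha'W : a' ∉ ({a, b, c} : Finset (Fin n)) := by simp [a, a', b, c, Fin.ext_iff]; omega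
  have hb'W : b' ∉ ({a, b, c} : Finset (Fin n)) := by simp [a, b, b', c, Fin.ext_iff]; omega
  refine ⟨{a, b, c}ᶜ, isLocalResolvingSet_compl_iff.mpr ?_, ?_⟩
  · rintro u hu v hv hadj
    simp only [mem_insert, mem_singleton] at hu hv
    obtain rfl | rfl | rfl := hu <;> obtain rfl | rfl | rfl := hv
    · exact absurd rfl hadj.ne
    · exact absurd hadj hab
    · exact ⟨b', hb'W, hresolve_ac⟩
    · exact absurd hadj.symm hab
    · exact absurd rfl hadj.ne
    · exact ⟨a', ha'W, hresolve_bc⟩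
    · exact ⟨b', hb'W, hresolve_ac.symm⟩
    · exact ⟨a', ha'W, hresolve_bc.symm⟩
    · exact absurd rfl hadj.ne
  · rw [card_compl, Fintype.card_fin,
      card_insert_of_notMem (by simp [a, b, c, Fin.ext_iff]; omega),
      card_pair (ne_of_apply_ne (part lam mu) (by simp [hb, hc]))]

end KnMinus

theorem stmt_6_general (n lam mu : ℕ) (hmu : 1 ≤ mu) (hml : mu ≤ lam)
    (hsum : lam + mu ≤ n - 1) :
    localDim (KnMinus n lam mu) = if mu = 1 then n - 2 else n - 3 := by
  have hsum' : lam + mu < n := by omega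
  split_ifs with hmu1
  · subst hmu1
    exact localDim_eq_of_exists (KnMinus.exists_isLocalResolvingSet_card_eq_sub_two hml hsum')
      fun W hW ↦ KnMinus.sub_two_le_card hsum' hW
  · exact localDim_eq_of_exists
      (KnMinus.exists_isLocalResolvingSet_card_eq_sub_three (by omega) (by omega) hsum')
      fun W hW ↦ KnMinus.sub_three_le_card hsum' hW

/-- `dim_l(K_n^-(λ,μ)) = n - 2` if `μ = 1`, and `n - 3` otherwise. -/
theorem stmt_6 (n lam mu : ℕ) (hn : 3 ≤ n) (hmu : 1 ≤ mu) (hml : mu ≤ lam)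
    (hsum : lam + mu ≤ n - 1) :
    localDim (KnMinus n lam mu) = if mu = 1 then n - 2 else n - 3 :=
  stmt_6_general n lam mu hmu hml hsum
end

section
/- If G is a connected graph with ω(G) ∈ {n(G)-1, n(G)-2, n(G)-3} and n(G) ≥ ω(G) + 1 ≥ 4, then dim_l(G) ≤ ((ω(G) - 2)/(ω(G) - 1)) · n(G). -/
open SimpleGraph

variable {V : Type*}

/-! If every edge inside `S` has an outside vertex adjacent to exactly one of its ends, then `Sᶜ`
is a local resolving set, since adjacency is distance `1`. A non-edge gives such an `S` of size `2`.
When `n(G) ≥ ω(G) + 2`, the non-edges are not all incident to one vertex, and a case analysis gives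
such an `S` of size `3`; then `n(G) ≤ ω(G) + 3 ≤ 3 (ω(G) - 1)` yields the bound. The delicate case is
a path `b - a - c - d` in the complement when any two non-neighbours of a vertex are closed twins:
connectivity then forces a common neighbour `e` of `a` and `c`, and `{a, c, e}` works, the separating
vertices being a non-neighbour of `e` if there is one, and `b`, `d` otherwise. -/

open Finset

namespace SimpleGraph

variable {G : SimpleGraph V}

def InnerEdgesAdjResolved (G : SimpleGraph V) (S : Finset V) : Prop :=
  ∀ u ∈ S, ∀ v ∈ S, G.Adj u v → ∃ w ∉ S, ¬(G.Adj u w ↔ G.Adj v w)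

def ClosedTwins (G : SimpleGraph V) (y z : V) : Prop :=
  G.Adj y z ∧ ∀ w, w ≠ y → w ≠ z → (G.Adj y w ↔ G.Adj z w)

theorem dist_ne_of_not_adj_iff {u v w : V} (h : ¬(G.Adj u w ↔ G.Adj v w)) :
    G.dist u w ≠ G.dist v w := by
  intro hd
  rw [← dist_eq_one_iff_adj, ← dist_eq_one_iff_adj, hd] at h
  exact h Iff.rfl

theorem InnerEdgesAdjResolved.isLocalResolvingSet_compl [Fintype V] [DecidableEq V]
    {S : Finset V} (hS : G.InnerEdgesAdjResolved S) : IsLocalResolvingSet G Sᶜ := by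
  intro u v hu hv huv
  rw [mem_compl, not_not] at hu hv
  obtain ⟨w, hw, hsep⟩ := hS u hu v hv huv
  exact ⟨w, mem_compl.mpr hw, dist_ne_of_not_adj_iff hsep⟩

theorem InnerEdgesAdjResolved.localDim_add_card_le [Fintype V] {S : Finset V}
    (hS : G.InnerEdgesAdjResolved S) : localDim G + #S ≤ Fintype.card V := by
  classical
  have h : localDim G ≤ #Sᶜ := Nat.sInf_le ⟨Sᶜ, hS.isLocalResolvingSet_compl, rfl⟩
  rw [card_compl] at h
  have := card_le_univ S
  omega

theorem innerEdgesAdjResolved_pair [DecidableEq V] {a b : V} (h : ¬G.Adj a b) :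
    G.InnerEdgesAdjResolved {a, b} := by
  intro u hu v hv huv
  simp only [mem_insert, mem_singleton] at hu hv
  rcases hu with rfl | rfl <;> rcases hv with rfl | rfl
  exacts [(G.irrefl huv).elim, (h huv).elim, (h huv.symm).elim, (G.irrefl huv).elim]

theorem innerEdgesAdjResolved_triple [DecidableEq V] {a b c : V} (hab : ¬G.Adj a b)
    (hac : G.Adj a c → ∃ w ∉ ({a, b, c} : Finset V), ¬(G.Adj a w ↔ G.Adj c w))
    (hbc : G.Adj b c → ∃ w ∉ ({a, b, c} : Finset V), ¬(G.Adj b w ↔ G.Adj c w)) :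
    G.InnerEdgesAdjResolved {a, b, c} := by
  have swap {u v : V} : (∃ w ∉ ({a, b, c} : Finset V), ¬(G.Adj u w ↔ G.Adj v w)) →
      ∃ w ∉ ({a, b, c} : Finset V), ¬(G.Adj v w ↔ G.Adj u w) :=
    fun ⟨w, hw, h⟩ => ⟨w, hw, fun h' => h h'.symm⟩
  intro u hu v hv huv
  simp only [mem_insert, mem_singleton] at hu hv
  rcases hu with rfl | rfl | rfl <;> rcases hv with rfl | rfl | rfl
  exacts [(G.irrefl huv).elim, (hab huv).elim, hac huv, (hab huv.symm).elim,
    (G.irrefl huv).elim, hbc huv, swap (hac huv.symm), swap (hbc huv.symm), (G.irrefl huv).elim]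

theorem exists_compl_adj_of_cliqueNum_lt_card [Finite V] {s : Finset V}
    (h : G.cliqueNum < #s) : ∃ a ∈ s, ∃ b ∈ s, Gᶜ.Adj a b := by
  by_contra! hs
  have hclique : G.IsClique (s : Set V) := fun a ha b hb hab => by
    by_contra hnadj
    exact hs a ha b hb ⟨hab, hnadj⟩
  exact hclique.card_le_cliqueNum.not_gt h

theorem exists_triangle_or_disjoint_edges [Nonempty V] (H : SimpleGraph V)
    (hcov : ∀ v, ∃ a b, H.Adj a b ∧ a ≠ v ∧ b ≠ v) :
    (∃ a b c, H.Adj a b ∧ H.Adj b c ∧ H.Adj a c) ∨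
      ∃ a b c d, H.Adj a b ∧ H.Adj c d ∧ a ≠ c ∧ a ≠ d ∧ b ≠ c ∧ b ≠ d := by
  obtain ⟨a, b, hab, -, -⟩ := hcov (Classical.arbitrary V)
  obtain ⟨c, d, hcd, hca, hda⟩ := hcov a
  by_cases hb : b ≠ c ∧ b ≠ d
  · exact .inr ⟨a, b, c, d, hab, hcd, hca.symm, hda.symm, hb.1, hb.2⟩
  obtain ⟨x, hbx, hxa⟩ : ∃ x, H.Adj b x ∧ x ≠ a := by
    rcases not_and_or.mp hb with h | h <;> rw [not_ne_iff] at h <;> subst h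
    exacts [⟨d, hcd, hda⟩, ⟨c, hcd.symm, hca⟩]
  obtain ⟨e, f, hef, heb, hfb⟩ := hcov b
  by_cases ha : a ≠ e ∧ a ≠ f
  · exact .inr ⟨a, b, e, f, hab, hef, ha.1, ha.2, heb.symm, hfb.symm⟩
  obtain ⟨y, hay, hyb⟩ : ∃ y, H.Adj a y ∧ y ≠ b := by
    rcases not_and_or.mp ha with h | h <;> rw [not_ne_iff] at h <;> subst h
    exacts [⟨f, hef, hfb⟩, ⟨e, hef.symm, heb⟩]
  by_cases hxy : x = y
  · subst hxy
    exact .inl ⟨a, b, x, hab, hbx, hay⟩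
  · exact .inr ⟨b, x, a, y, hbx, hay, hab.ne.symm, hyb.symm, hxa, hxy⟩

theorem ClosedTwins.compl_adj_iff {y z : V} (h : G.ClosedTwins y z) (w : V) :
    Gᶜ.Adj y w ↔ Gᶜ.Adj z w := by
  simp only [compl_adj]
  by_cases hwy : w = y
  · subst hwy
    exact iff_of_false (fun h => h.1 rfl) fun h' => h'.2 h.1.symm
  by_cases hwz : w = z
  · subst hwz
    exact iff_of_false (fun h' => h'.2 h.1) fun h => h.1 rfl
  rw [h.2 w hwy hwz]
  exact and_congr_left' ⟨fun _ => Ne.symm hwz, fun _ => Ne.symm hwy⟩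

theorem exists_card_three_of_not_closedTwins [DecidableEq V] {x y z : V} (hxy : Gᶜ.Adj x y)
    (hxz : Gᶜ.Adj x z) (hyz : y ≠ z) (h : ¬G.ClosedTwins y z) :
    ∃ S : Finset V, #S = 3 ∧ G.InnerEdgesAdjResolved S := by
  refine ⟨{y, x, z}, card_eq_three.mpr ⟨y, x, z, hxy.ne.symm, hyz, hxz.ne, rfl⟩,
    innerEdgesAdjResolved_triple (fun h' => hxy.2 h'.symm) (fun hadj => ?_)
      (fun h' => (hxz.2 h').elim)⟩
  obtain ⟨w, hwy, hwz, hsep⟩ : ∃ w, w ≠ y ∧ w ≠ z ∧ ¬(G.Adj y w ↔ G.Adj z w) := by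
    simpa [ClosedTwins, hadj] using h
  have hwx : w ≠ x := by
    rintro rfl
    exact hsep (iff_of_false (fun h' => hxy.2 h'.symm) fun h' => hxz.2 h'.symm)
  exact ⟨w, by simp [hwx, hwy, hwz], hsep⟩

def NonNeighborsClosedTwins (G : SimpleGraph V) : Prop :=
  ∀ x y z : V, y ≠ z → Gᶜ.Adj x y → Gᶜ.Adj x z → G.ClosedTwins y z

theorem NonNeighborsClosedTwins.compl_adj_iff (hT : G.NonNeighborsClosedTwins) {a c x : V}
    (hac : Gᶜ.Adj a c) (hax : Gᶜ.Adj a x) (w : V) : Gᶜ.Adj x w ↔ Gᶜ.Adj c w := by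
  by_cases hxc : x = c
  · rw [hxc]
  · exact (hT a x c hxc hax hac).compl_adj_iff w

-- Otherwise the non-neighbours of `a` are closed under adjacency, and `c` is one of them.
theorem NonNeighborsClosedTwins.exists_common_adj (hT : G.NonNeighborsClosedTwins)
    (hconn : G.Connected) {a c : V} (hac : Gᶜ.Adj a c) : ∃ e, G.Adj a e ∧ G.Adj c e := by
  by_contra! hno
  obtain ⟨p⟩ := hconn.preconnected c a
  obtain ⟨⟨⟨x, z⟩, hxz⟩, -, hax, haz⟩ :=
    p.exists_boundary_dart {v | Gᶜ.Adj a v} hac (Gᶜ.irrefl ·)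
  simp only [Set.mem_ofPred_eq, compl_adj, not_and, not_not] at hax haz hxz
  have hza : z ≠ a := by
    rintro rfl
    exact hax.2 hxz.symm
  have hadj_az : G.Adj a z := haz (Ne.symm hza)
  have hcz : Gᶜ.Adj c z := ⟨fun h => hac.2 (h ▸ hadj_az), hno z hadj_az⟩
  exact ((hT.compl_adj_iff hac hax z).mpr hcz).2 hxz

theorem NonNeighborsClosedTwins.exists_card_three [DecidableEq V]
    (hT : G.NonNeighborsClosedTwins) {a b c d e : V} (hac : Gᶜ.Adj a c) (hab : Gᶜ.Adj a b)
    (hcd : Gᶜ.Adj c d) (hbc : b ≠ c) (hda : d ≠ a) (hae : G.Adj a e) (hce : G.Adj c e) :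
    ∃ S : Finset V, #S = 3 ∧ G.InnerEdgesAdjResolved S := by
  refine ⟨{a, c, e}, card_eq_three.mpr ⟨a, c, e, hac.ne, hae.ne, hce.ne, rfl⟩, ?_⟩
  by_cases hw : ∃ w, Gᶜ.Adj e w
  · obtain ⟨w, hew⟩ := hw
    have haw : G.Adj a w := by
      by_contra haw
      have hwa : w ≠ a := by
        rintro rfl
        exact hew.2 hae.symm
      exact ((hT.compl_adj_iff hac ⟨hwa.symm, haw⟩ e).mp hew.symm).2 hce
    have hcw : G.Adj c w := by
      by_contra hcw
      have hwc : w ≠ c := by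
        rintro rfl
        exact hew.2 hce.symm
      exact ((hT.compl_adj_iff hac.symm ⟨hwc.symm, hcw⟩ e).mp hew.symm).2 hae
    have hw : w ∉ ({a, c, e} : Finset V) := by
      simp [haw.ne.symm, hcw.ne.symm, hew.ne.symm]
    exact innerEdgesAdjResolved_triple hac.2 (fun _ => ⟨w, hw, fun h => hew.2 (h.mp haw)⟩)
      fun _ => ⟨w, hw, fun h => hew.2 (h.mp hcw)⟩
  · push Not at hw
    have heb : G.Adj e b := by_contra fun h => hw b ⟨fun h' => hab.2 (h' ▸ hae), h⟩
    have hed : G.Adj e d := by_contra fun h => hw d ⟨fun h' => hcd.2 (h' ▸ hce), h⟩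
    refine innerEdgesAdjResolved_triple hac.2 (fun _ => ⟨b, ?_, fun h => hab.2 (h.mpr heb)⟩)
      fun _ => ⟨d, ?_, fun h => hcd.2 (h.mpr hed)⟩
    · simp [hab.ne.symm, hbc, heb.ne.symm]
    · simp [hda, hcd.ne.symm, hed.ne.symm]

theorem exists_card_three_of_compl_path [DecidableEq V] (hconn : G.Connected) {a b c d : V}
    (hab : Gᶜ.Adj a b) (hac : Gᶜ.Adj a c) (hcd : Gᶜ.Adj c d) (hbc : b ≠ c) (hda : d ≠ a) :
    ∃ S : Finset V, #S = 3 ∧ G.InnerEdgesAdjResolved S := by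
  by_cases hT : G.NonNeighborsClosedTwins
  · obtain ⟨e, hae, hce⟩ := hT.exists_common_adj hconn hac
    exact hT.exists_card_three hac hab hcd hbc hda hae hce
  · simp only [NonNeighborsClosedTwins, not_forall, exists_prop] at hT
    obtain ⟨x, y, z, hyz, hxy, hxz, htw⟩ := hT
    exact exists_card_three_of_not_closedTwins hxy hxz hyz htw

theorem exists_card_three_of_disjoint_compl_adj [DecidableEq V] (hconn : G.Connected)
    {a b c d : V} (hab : Gᶜ.Adj a b) (hcd : Gᶜ.Adj c d) (hac : a ≠ c) (had : a ≠ d)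
    (hbc : b ≠ c) (hbd : b ≠ d) : ∃ S : Finset V, #S = 3 ∧ G.InnerEdgesAdjResolved S := by
  by_cases h₁ : G.Adj a c
  swap
  · exact exists_card_three_of_compl_path hconn hab ⟨hac, h₁⟩ hcd hbc had.symm
  by_cases h₂ : G.Adj a d
  swap
  · exact exists_card_three_of_compl_path hconn hab ⟨had, h₂⟩ hcd.symm hbd hac.symm
  by_cases h₃ : G.Adj b c
  swap
  · exact exists_card_three_of_compl_path hconn hab.symm ⟨hbc, h₃⟩ hcd hac hbd.symm
  by_cases h₄ : G.Adj b d
  swap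
  · exact exists_card_three_of_compl_path hconn hab.symm ⟨hbd, h₄⟩ hcd.symm had hbc.symm
  have hd : d ∉ ({a, b, c} : Finset V) := by simp [had.symm, hbd.symm, hcd.ne.symm]
  exact ⟨{a, b, c}, card_eq_three.mpr ⟨a, b, c, hab.ne, hac, hbc, rfl⟩,
    innerEdgesAdjResolved_triple hab.2 (fun _ => ⟨d, hd, fun h => hcd.2 (h.mp h₂)⟩)
      fun _ => ⟨d, hd, fun h => hcd.2 (h.mp h₄)⟩⟩

theorem exists_card_three_innerEdgesAdjResolved [DecidableEq V] (hconn : G.Connected)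
    (hcov : ∀ v, ∃ a b, Gᶜ.Adj a b ∧ a ≠ v ∧ b ≠ v) :
    ∃ S : Finset V, #S = 3 ∧ G.InnerEdgesAdjResolved S := by
  have := hconn.nonempty
  rcases exists_triangle_or_disjoint_edges Gᶜ hcov with
    ⟨a, b, c, hab, hbc, hac⟩ | ⟨a, b, c, d, hab, hcd, hac, had, hbc, hbd⟩
  · exact exists_card_three_of_not_closedTwins hab hac hbc.ne fun h => hbc.2 h.1
  · exact exists_card_three_of_disjoint_compl_adj hconn hab hcd hac had hbc hbd

end SimpleGraph

theorem le_div_sub_one_mul {d k n ω : ℕ} (hω : 2 ≤ ω) (hd : d + k ≤ n)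
    (hn : n ≤ k * (ω - 1)) : (d : ℝ) ≤ ((ω : ℝ) - 2) / ((ω : ℝ) - 1) * n := by
  have hω' : (2 : ℝ) ≤ ω := by exact_mod_cast hω
  have hd' : (d : ℝ) + k ≤ n := by exact_mod_cast hd
  have hn' : (n : ℝ) ≤ k * ((ω : ℝ) - 1) := by
    rw [← Nat.cast_pred (by omega)]
    exact_mod_cast hn
  rw [div_mul_eq_mul_div, le_div_iff₀ (by linarith)]
  nlinarith

/-- If `ω(G) ∈ {n(G)-1, n(G)-2, n(G)-3}` and `n(G) ≥ ω(G) + 1 ≥ 4`, then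
`dim_l(G) ≤ ((ω(G) - 2)/(ω(G) - 1)) · n(G)`. -/
theorem stmt_13 [Fintype V] (G : SimpleGraph V) (hconn : G.Connected)
    (hw : G.cliqueNum = Fintype.card V - 1 ∨ G.cliqueNum = Fintype.card V - 2 ∨
          G.cliqueNum = Fintype.card V - 3)
    (h1 : G.cliqueNum + 1 ≤ Fintype.card V) (h2 : 4 ≤ G.cliqueNum + 1) :
    (localDim G : ℝ) ≤
      (((G.cliqueNum : ℝ) - 2) / ((G.cliqueNum : ℝ) - 1)) * Fintype.card V := by
  classical
  obtain ⟨S, hS, hn⟩ : ∃ S : Finset V, G.InnerEdgesAdjResolved S ∧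
      Fintype.card V ≤ #S * (G.cliqueNum - 1) := by
    by_cases hn : Fintype.card V = G.cliqueNum + 1
    · obtain ⟨a, -, b, -, hab⟩ :=
        G.exists_compl_adj_of_cliqueNum_lt_card (s := univ) (by rw [card_univ]; omega)
      exact ⟨{a, b}, innerEdgesAdjResolved_pair hab.2, by rw [card_pair hab.ne]; omega⟩
    · have hcov (v : V) : ∃ a b, Gᶜ.Adj a b ∧ a ≠ v ∧ b ≠ v := by
        obtain ⟨a, ha, b, hb, hab⟩ := G.exists_compl_adj_of_cliqueNum_lt_card (s := univ.erase v)
          (by rw [card_erase_of_mem (mem_univ v), card_univ]; omega)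
        exact ⟨a, b, hab, ne_of_mem_erase ha, ne_of_mem_erase hb⟩
      obtain ⟨S, hcard, hS⟩ := exists_card_three_innerEdgesAdjResolved hconn hcov
      exact ⟨S, hS, by rw [hcard]; omega⟩
  exact le_div_sub_one_mul (by omega) hS.localDim_add_card_le hn
end
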